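/- Under the iConEF-v1 algorithm (p_t^i = η g_t^i + ẽ_t^i + q_t^i; Δ_t^i = Q(p_t^i); x_{t+1} = x_t − (1/N)Σ_i Δ_t^i; ẽ_{t+1}^i = C(p_t^i − Δ_t^i); q_{t+1}^i = C(p_t^i − Δ_t^i − ẽ_{t+1}^i); ẽ_0^i = q_0^i = 0), with stochastic gradients satisfying E[g_t^i | x_t] = ∇f(x_t), E[||g_t^i − ∇f(x_t)||² | x_t] ≤ σ², E[||∇f(x_t)||²] ≤ G², error compressor C unbiased with E[||C(x) − x||² | x] ≤ θ||x||², and gradient compressor Q satisfying E[||Q(x) − x||² | x] ≤ δ||x||²: if δ = c/((1+λ)(1+θ)²) for some c ∈ (0,1), λ > 0, then writing e_{t+1}^i = ẽ_{t+1}^i + q_{t+1}^i, it holds for every t ≥ 0 that E[|| (1/N) Σ_{i=1}^N e_{t+1}^i ||²] ≤ (c/((1−c)λ)) · η² (σ² + G²). -/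

import Mathlib

/-!
Conditionally on the past, a worker's new error is `C r + C (r - C r)` for the residual
`r = p - Q p` of `p = e + η g`, all compressor seeds being fresh. Since `C` is unbiased, the
second call only adds its variance, so the mean square is at most
`‖r‖² + θ E‖r - C r‖² ≤ (1 + θ²) ‖r‖²`, and the contraction of `Q` turns this into
`(1 + θ²) δ ‖p‖² ≤ c ‖p‖² / (1 + λ)`. Splitting `E‖p‖² ≤ ‖e + η ∇f‖² + η² σ²` by Young's
inequality with weight `λ` gives the one-step recursion
`E‖e_{t+1}‖² ≤ c E‖e_t‖² + (c / λ) η² (σ² + G²)`, whose solution from `e_0 = 0` stays below its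
fixed point `c η² (σ² + G²) / ((1 - c) λ)`. The average over workers inherits the bound by
convexity of `‖·‖²`.
-/

open MeasureTheory ProbabilityTheory
open scoped ENNReal

lemma coe_nnnorm_sq {E : Type*} [SeminormedAddGroup E] (v : E) :
    (‖v‖₊ : ℝ≥0∞) ^ 2 = ENNReal.ofReal (‖v‖ ^ 2) := by
  rw [ENNReal.ofReal_pow (norm_nonneg v), ofReal_norm]; rfl

lemma norm_add_sq_le_weighted {E : Type*} [SeminormedAddGroup E] (u w : E) {lam : ℝ}
    (hlam : 0 < lam) : ‖u + w‖ ^ 2 ≤ (1 + lam) * ‖u‖ ^ 2 + (1 + lam⁻¹) * ‖w‖ ^ 2 :=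
  calc ‖u + w‖ ^ 2 ≤ (‖u‖ + ‖w‖) ^ 2 := by gcongr; exact norm_add_le u w
    _ = ‖u‖ ^ 2 + ‖w‖ ^ 2 + 2 * ‖u‖ * ‖w‖ := by ring
    _ ≤ ‖u‖ ^ 2 + ‖w‖ ^ 2 + (lam * ‖u‖ ^ 2 + lam⁻¹ * ‖w‖ ^ 2) := by
        gcongr; exact two_mul_le_add_mul_sq hlam
    _ = (1 + lam) * ‖u‖ ^ 2 + (1 + lam⁻¹) * ‖w‖ ^ 2 := by ring

lemma norm_smul_sum_sq_le {ι E : Type*} [SeminormedAddCommGroup E] [NormedSpace ℝ E]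
    (s : Finset ι) (v : ι → E) :
    ‖(s.card : ℝ)⁻¹ • ∑ i ∈ s, v i‖ ^ 2 ≤ (s.card : ℝ)⁻¹ * ∑ i ∈ s, ‖v i‖ ^ 2 := by
  rcases s.eq_empty_or_nonempty with rfl | hs
  · simp
  have hcard : (0 : ℝ) < s.card := by exact_mod_cast hs.card_pos
  calc ‖(s.card : ℝ)⁻¹ • ∑ i ∈ s, v i‖ ^ 2
      ≤ ((s.card : ℝ)⁻¹) ^ 2 * (∑ i ∈ s, ‖v i‖) ^ 2 := by
        rw [norm_smul, mul_pow, Real.norm_of_nonneg (by positivity)]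
        gcongr
        exact norm_sum_le s v
    _ ≤ ((s.card : ℝ)⁻¹) ^ 2 * (s.card * ∑ i ∈ s, ‖v i‖ ^ 2) := by
        gcongr; exact sq_sum_le_card_mul_sum_sq
    _ = (s.card : ℝ)⁻¹ * ∑ i ∈ s, ‖v i‖ ^ 2 := by field_simp

lemma lintegral_norm_smul_sum_sq_le {α ι E : Type*} [MeasurableSpace α] {μ : Measure α}
    [SeminormedAddCommGroup E] [NormedSpace ℝ E] (s : Finset ι) {v : ι → α → E}
    (hv : ∀ i ∈ s, AEStronglyMeasurable (v i) μ) {B : ℝ≥0∞}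
    (hB : ∀ i ∈ s, ∫⁻ ω, ENNReal.ofReal (‖v i ω‖ ^ 2) ∂μ ≤ B) :
    ∫⁻ ω, ENNReal.ofReal (‖(s.card : ℝ)⁻¹ • ∑ i ∈ s, v i ω‖ ^ 2) ∂μ ≤ B :=
  calc ∫⁻ ω, ENNReal.ofReal (‖(s.card : ℝ)⁻¹ • ∑ i ∈ s, v i ω‖ ^ 2) ∂μ
      ≤ ∫⁻ ω, ENNReal.ofReal (s.card : ℝ)⁻¹ * ∑ i ∈ s, ENNReal.ofReal (‖v i ω‖ ^ 2) ∂μ := by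
        refine lintegral_mono fun ω => ?_
        rw [← ENNReal.ofReal_sum_of_nonneg (fun i _ => by positivity),
          ← ENNReal.ofReal_mul (by positivity)]
        exact ENNReal.ofReal_le_ofReal (norm_smul_sum_sq_le s _)
    _ = ENNReal.ofReal (s.card : ℝ)⁻¹ * ∑ i ∈ s, ∫⁻ ω, ENNReal.ofReal (‖v i ω‖ ^ 2) ∂μ := by
        rw [lintegral_const_mul' _ _ ENNReal.ofReal_ne_top, lintegral_finsetSum' s
          fun i hi => ((hv i hi).norm.aemeasurable.pow_const 2).ennreal_ofReal]
    _ ≤ ENNReal.ofReal (s.card : ℝ)⁻¹ * (s.card * B) := by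
        gcongr
        simpa using Finset.sum_le_card_nsmul s _ B hB
    _ ≤ B := by
        rcases s.eq_empty_or_nonempty with rfl | hs
        · simp
        rw [← mul_assoc, ENNReal.ofReal_inv_of_pos (by exact_mod_cast hs.card_pos),
          ENNReal.ofReal_natCast, ENNReal.inv_mul_cancel (by simpa using hs.ne_empty)
            (ENNReal.natCast_ne_top _), one_mul]

lemma ENNReal.le_ofReal_div_one_sub_of_le_mul_add {a : ℕ → ℝ≥0∞} {c K : ℝ} (hc0 : 0 ≤ c)
    (hc1 : c < 1) (hK : 0 ≤ K) (h0 : a 0 = 0)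
    (hstep : ∀ t, a (t + 1) ≤ ENNReal.ofReal c * a t + ENNReal.ofReal K) (t : ℕ) :
    a t ≤ ENNReal.ofReal (K / (1 - c)) := by
  have h1c : 0 < 1 - c := sub_pos.2 hc1
  induction t with
  | zero => simp [h0]
  | succ t ih =>
    have hfix : c * (K / (1 - c)) + K = K / (1 - c) := by field_simp; ring
    calc a (t + 1) ≤ ENNReal.ofReal c * a t + ENNReal.ofReal K := hstep t
      _ ≤ ENNReal.ofReal c * ENNReal.ofReal (K / (1 - c)) + ENNReal.ofReal K := by gcongr
      _ = ENNReal.ofReal (K / (1 - c)) := by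
        rw [← ENNReal.ofReal_mul hc0, ← ENNReal.ofReal_add (by positivity) hK, hfix]

lemma lintegral_norm_add_sq_le {α E : Type*} [MeasurableSpace α] {ν : Measure α}
    [IsProbabilityMeasure ν] [NormedAddCommGroup E] [InnerProductSpace ℝ E] [CompleteSpace E]
    {Y : α → E} (hY : AEStronglyMeasurable Y ν) (v : E) :
    ∫⁻ ω, ENNReal.ofReal (‖v + Y ω‖ ^ 2) ∂ν ≤ ENNReal.ofReal (‖v + ∫ ω, Y ω ∂ν‖ ^ 2)
      + ∫⁻ ω, ENNReal.ofReal (‖Y ω - ∫ ω, Y ω ∂ν‖ ^ 2) ∂ν := by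
  set m := ∫ ω, Y ω ∂ν
  by_cases hfin : ∫⁻ ω, ENNReal.ofReal (‖Y ω - m‖ ^ 2) ∂ν = ∞
  · rw [hfin, add_top]; exact le_top
  have hZm : AEStronglyMeasurable (fun ω => Y ω - m) ν := hY.sub aestronglyMeasurable_const
  have hsq : Integrable (fun ω => ‖Y ω - m‖ ^ 2) ν :=
    ⟨hZm.norm.pow 2, (hasFiniteIntegral_iff_ofReal (ae_of_all _ fun _ => sq_nonneg _)).2
      (lt_top_iff_ne_top.2 hfin)⟩
  have hZ : Integrable (fun ω => Y ω - m) ν :=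
    ((memLp_two_iff_integrable_sq_norm hZm).2 hsq).integrable one_le_two
  have hcenter : ∫ ω, (Y ω - m) ∂ν = 0 := by
    have hYint : Integrable Y ν :=
      (hZ.add (integrable_const m)).congr (ae_of_all _ fun ω => sub_add_cancel (Y ω) m)
    rw [integral_sub hYint (integrable_const m), integral_const]
    simp [m]
  have hexpand : ∀ ω, ‖v + Y ω‖ ^ 2
      = ‖v + m‖ ^ 2 + (2 * inner ℝ (v + m) (Y ω - m) + ‖Y ω - m‖ ^ 2) := fun ω => by
    rw [show v + Y ω = (v + m) + (Y ω - m) by abel, norm_add_sq_real]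
    ring
  have hcross : Integrable (fun ω => 2 * inner ℝ (v + m) (Y ω - m) + ‖Y ω - m‖ ^ 2) ν :=
    ((hZ.const_inner (v + m)).const_mul 2).add hsq
  have hint : Integrable (fun ω => ‖v + Y ω‖ ^ 2) ν := by
    simp_rw [hexpand]; exact (integrable_const _).add hcross
  refine le_of_eq ?_
  calc ∫⁻ ω, ENNReal.ofReal (‖v + Y ω‖ ^ 2) ∂ν
      = ENNReal.ofReal (∫ ω, ‖v + Y ω‖ ^ 2 ∂ν) :=
        (ofReal_integral_eq_lintegral_ofReal hint (ae_of_all _ fun _ => sq_nonneg _)).symm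
    _ = ENNReal.ofReal (‖v + m‖ ^ 2 + ∫ ω, ‖Y ω - m‖ ^ 2 ∂ν) := by
        simp_rw [hexpand]
        rw [integral_add (integrable_const _) hcross,
          integral_add ((hZ.const_inner _).const_mul 2) hsq, integral_const_mul,
          integral_inner hZ, hcenter]
        simp
    _ = ENNReal.ofReal (‖v + m‖ ^ 2) + ∫⁻ ω, ENNReal.ofReal (‖Y ω - m‖ ^ 2) ∂ν := by
        rw [ENNReal.ofReal_add (sq_nonneg _) (integral_nonneg fun _ => sq_nonneg _),
          ofReal_integral_eq_lintegral_ofReal hsq (ae_of_all _ fun _ => sq_nonneg _)]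

lemma lintegral_comp_le_of_indepFun {Ω α β : Type*} [MeasurableSpace Ω] [MeasurableSpace α]
    [MeasurableSpace β] {μ : Measure Ω} [IsFiniteMeasure μ] {Z : Ω → α} {S : Ω → β}
    (hZ : Measurable Z) (hS : Measurable S) (hZS : IndepFun Z S μ) {φ : α × β → ℝ≥0∞}
    (hφ : Measurable φ) {ψ : α → ℝ≥0∞} (hψ : ∀ z, ∫⁻ s, φ (z, s) ∂(μ.map S) ≤ ψ z) :
    ∫⁻ ω, φ (Z ω, S ω) ∂μ ≤ ∫⁻ ω, ψ (Z ω) ∂μ :=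
  calc ∫⁻ ω, φ (Z ω, S ω) ∂μ = ∫⁻ w, φ w ∂(μ.map fun ω => (Z ω, S ω)) :=
        (lintegral_map hφ (hZ.prodMk hS)).symm
    _ = ∫⁻ z, ∫⁻ s, φ (z, s) ∂(μ.map S) ∂(μ.map Z) := by
        rw [(indepFun_iff_map_prod_eq_prod_map_map hZ.aemeasurable hS.aemeasurable).1 hZS,
          lintegral_prod _ hφ.aemeasurable]
    _ ≤ ∫⁻ z, ψ z ∂(μ.map Z) := lintegral_mono hψ
    _ ≤ ∫⁻ ω, ψ (Z ω) ∂μ := lintegral_map_le _ _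

section PastSeeds

variable {Ω ι β : Type*} [MeasurableSpace β]

abbrev pastSeeds (seed : ℕ → ι → Ω → β) (t : ℕ) : MeasurableSpace Ω :=
  ⨆ j ∈ {j : ℕ × ι | j.1 < t}, MeasurableSpace.comap (seed j.1 j.2) ‹_›

lemma pastSeeds_mono (seed : ℕ → ι → Ω → β) : Monotone (pastSeeds seed) :=
  fun _ _ hst => biSup_mono fun _ hj => lt_of_lt_of_le hj hst

lemma measurable_pastSeeds_seed (seed : ℕ → ι → Ω → β) {s t : ℕ} (hst : s < t) (i : ι) :
    Measurable[pastSeeds seed t] (seed s i) :=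
  Measurable.of_comap_le <| le_iSup₂ (f := fun (j : ℕ × ι) (_ : j ∈ {j : ℕ × ι | j.1 < t}) =>
    MeasurableSpace.comap (seed j.1 j.2) ‹_›) (s, i) hst

variable [MeasurableSpace Ω] {seed : ℕ → ι → Ω → β}

lemma pastSeeds_le (hseed : ∀ t i, Measurable (seed t i)) (t : ℕ) :
    pastSeeds seed t ≤ ‹MeasurableSpace Ω› :=
  iSup₂_le fun j _ => (hseed j.1 j.2).comap_le

lemma indepFun_seed_of_measurable_pastSeeds {μ : Measure Ω}
    (hseed : ∀ t i, Measurable (seed t i)) (hindep : iIndepFun (fun j : ℕ × ι => seed j.1 j.2) μ)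
    {γ : Type*} [MeasurableSpace γ] {Z : Ω → γ} {t : ℕ} (hZ : Measurable[pastSeeds seed t] Z)
    (i : ι) : IndepFun Z (seed t i) μ := by
  have h := indep_iSup_of_disjoint (fun j => (hseed j.1 j.2).comap_le) hindep.iIndep
    (S := {j : ℕ × ι | j.1 < t}) (T := {(t, i)}) (by simp)
  rw [iSup_singleton] at h
  exact (IndepFun_iff_Indep _ _ _).2 (indep_of_indep_of_le_left h hZ.comap_le)

end PastSeeds
section Estimators

variable {α Ω E : Type*} [MeasurableSpace α] [MeasurableSpace Ω] [NormedAddCommGroup E]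
  [MeasurableSpace E]

structure IsUnbiasedEstimator [NormedSpace ℝ E] (Y : α → Ω → E) (ν : Measure Ω) (m : α → E)
    (v : α → ℝ) : Prop where
  measurable : Measurable (Function.uncurry Y)
  integral_eq : ∀ a, ∫ ω, Y a ω ∂ν = m a
  lintegral_norm_sub_sq_le :
    ∀ a, ∫⁻ ω, ENNReal.ofReal (‖Y a ω - m a‖ ^ 2) ∂ν ≤ ENNReal.ofReal (v a)

namespace IsUnbiasedEstimator

variable [NormedSpace ℝ E] {Y : α → Ω → E} {ν : Measure Ω} {m : α → E} {v : α → ℝ}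

lemma measurable_apply (hY : IsUnbiasedEstimator Y ν m v) (a : α) : Measurable (Y a) :=
  hY.measurable.comp (measurable_const.prodMk measurable_id)

lemma const_smul [BorelSpace E] (hY : IsUnbiasedEstimator Y ν m v) (η : ℝ) :
    IsUnbiasedEstimator (fun a ω => η • Y a ω) ν (fun a => η • m a) (fun a => η ^ 2 * v a) where
  measurable := hY.measurable.const_smul η
  integral_eq a := by rw [integral_smul, hY.integral_eq]
  lintegral_norm_sub_sq_le a := by
    simp_rw [← smul_sub, norm_smul, mul_pow, Real.norm_eq_abs, sq_abs,
      ENNReal.ofReal_mul (sq_nonneg η)]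
    rw [lintegral_const_mul' _ _ ENNReal.ofReal_ne_top]
    gcongr
    exact hY.lintegral_norm_sub_sq_le a

end IsUnbiasedEstimator

lemma IsUnbiasedEstimator.lintegral_norm_add_sq_le [InnerProductSpace ℝ E] [CompleteSpace E]
    [BorelSpace E] [SecondCountableTopology E] {Y : α → Ω → E} {ν : Measure Ω}
    [IsProbabilityMeasure ν] {m : α → E} {v : α → ℝ} (hY : IsUnbiasedEstimator Y ν m v) (a : α)
    (w : E) :
    ∫⁻ ω, ENNReal.ofReal (‖w + Y a ω‖ ^ 2) ∂ν
      ≤ ENNReal.ofReal (‖w + m a‖ ^ 2) + ENNReal.ofReal (v a) := by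
  have h := _root_.lintegral_norm_add_sq_le (ν := ν) (hY.measurable_apply a).aestronglyMeasurable w
  rw [hY.integral_eq] at h
  exact h.trans (by gcongr; exact hY.lintegral_norm_sub_sq_le a)

lemma IsUnbiasedEstimator.lintegral_norm_add_smul_sq_le [InnerProductSpace ℝ E]
    [CompleteSpace E] [BorelSpace E] [SecondCountableTopology E] {Y : α → Ω → E}
    {ν : Measure Ω} [IsProbabilityMeasure ν] {m : α → E} {v : α → ℝ}
    (hY : IsUnbiasedEstimator Y ν m v) {lam : ℝ} (hlam : 0 < lam) (η : ℝ) (a : α) (w : E) :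
    ∫⁻ ω, ENNReal.ofReal (‖w + η • Y a ω‖ ^ 2) ∂ν
      ≤ ENNReal.ofReal ((1 + lam) * ‖w‖ ^ 2 + (1 + lam⁻¹) * (η ^ 2 * ‖m a‖ ^ 2))
        + ENNReal.ofReal (η ^ 2 * v a) := by
  refine ((hY.const_smul η).lintegral_norm_add_sq_le a w).trans ?_
  gcongr
  have h := norm_add_sq_le_weighted w (η • m a) hlam
  rwa [norm_smul, mul_pow, Real.norm_eq_abs, sq_abs] at h

def twoStageCompress (C : E → Ω → E) (a : E) (s : Ω × Ω) : E :=
  C a s.1 + C (a - C a s.1) s.2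

lemma measurable_twoStageCompress [BorelSpace E] [SecondCountableTopology E] {C : E → Ω → E}
    (hC : Measurable (Function.uncurry C)) :
    Measurable (Function.uncurry (twoStageCompress C)) := by
  have h1 : Measurable fun w : E × Ω × Ω => C w.1 w.2.1 :=
    hC.comp (measurable_fst.prodMk measurable_snd.fst)
  exact h1.add (hC.comp ((measurable_fst.sub h1).prodMk measurable_snd.snd))

lemma lintegral_twoStageCompress_le [InnerProductSpace ℝ E] [CompleteSpace E] [BorelSpace E]
    [SecondCountableTopology E] {ν : Measure Ω} [IsProbabilityMeasure ν] {C : E → Ω → E}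
    {θ : ℝ} (hC : IsUnbiasedEstimator C ν id (fun a => θ * ‖a‖ ^ 2)) (hθ : 0 ≤ θ) (a : E) :
    ∫⁻ s, ENNReal.ofReal (‖twoStageCompress C a s‖ ^ 2) ∂(ν.prod ν)
      ≤ ENNReal.ofReal ((1 + θ ^ 2) * ‖a‖ ^ 2) := by
  have hm : Measurable fun s => ENNReal.ofReal (‖twoStageCompress C a s‖ ^ 2) :=
    ((measurable_twoStageCompress hC.measurable).comp
      (measurable_const.prodMk measurable_id)).norm.pow_const 2 |>.ennreal_ofReal
  -- the second call compresses the residual `a - C a s₁` around the offset `C a s₁`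
  have hinner : ∀ s₁, ∫⁻ s₂, ENNReal.ofReal (‖twoStageCompress C a (s₁, s₂)‖ ^ 2) ∂ν
      ≤ ENNReal.ofReal (‖a‖ ^ 2) + ENNReal.ofReal θ * ENNReal.ofReal (‖C a s₁ - a‖ ^ 2) := by
    intro s₁
    have h := hC.lintegral_norm_add_sq_le (a - C a s₁) (C a s₁)
    rwa [id, add_sub_cancel, ENNReal.ofReal_mul hθ, norm_sub_rev] at h
  calc ∫⁻ s, ENNReal.ofReal (‖twoStageCompress C a s‖ ^ 2) ∂(ν.prod ν)
      = ∫⁻ s₁, ∫⁻ s₂, ENNReal.ofReal (‖twoStageCompress C a (s₁, s₂)‖ ^ 2) ∂ν ∂ν :=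
        lintegral_prod _ hm.aemeasurable
    _ ≤ ∫⁻ s₁, ENNReal.ofReal (‖a‖ ^ 2)
          + ENNReal.ofReal θ * ENNReal.ofReal (‖C a s₁ - a‖ ^ 2) ∂ν :=
        lintegral_mono hinner
    _ ≤ ENNReal.ofReal (‖a‖ ^ 2) + ENNReal.ofReal θ * ENNReal.ofReal (θ * ‖a‖ ^ 2) := by
        rw [lintegral_add_left measurable_const, lintegral_const, measure_univ, mul_one,
          lintegral_const_mul' _ _ ENNReal.ofReal_ne_top]
        gcongr
        exact hC.lintegral_norm_sub_sq_le a
    _ = ENNReal.ofReal ((1 + θ ^ 2) * ‖a‖ ^ 2) := by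
        rw [← ENNReal.ofReal_mul hθ, ← ENNReal.ofReal_add (by positivity) (by positivity)]
        ring_nf

lemma lintegral_twoStageCompress_sub_le {ΩQ : Type*} [MeasurableSpace ΩQ]
    [InnerProductSpace ℝ E] [CompleteSpace E] [BorelSpace E] [SecondCountableTopology E]
    {νQ : Measure ΩQ} [IsProbabilityMeasure νQ] {ν : Measure Ω} [IsProbabilityMeasure ν]
    {C : E → Ω → E} {θ δ : ℝ} (hC : IsUnbiasedEstimator C ν id (fun a => θ * ‖a‖ ^ 2))
    (hθ : 0 ≤ θ) {Q : E → ΩQ → E} (hQm : Measurable (Function.uncurry Q))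
    (hQ : ∀ a, ∫⁻ s, ENNReal.ofReal (‖Q a s - a‖ ^ 2) ∂νQ ≤ ENNReal.ofReal (δ * ‖a‖ ^ 2))
    (p : E) :
    ∫⁻ s, ENNReal.ofReal (‖twoStageCompress C (p - Q p s.1) s.2‖ ^ 2) ∂(νQ.prod (ν.prod ν))
      ≤ ENNReal.ofReal ((1 + θ ^ 2) * δ * ‖p‖ ^ 2) := by
  have hm : Measurable fun s : ΩQ × Ω × Ω =>
      ENNReal.ofReal (‖twoStageCompress C (p - Q p s.1) s.2‖ ^ 2) :=
    ((measurable_twoStageCompress hC.measurable).comp ((measurable_const.sub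
      (hQm.comp (measurable_const.prodMk measurable_fst))).prodMk measurable_snd)).norm.pow_const 2
      |>.ennreal_ofReal
  calc ∫⁻ s, ENNReal.ofReal (‖twoStageCompress C (p - Q p s.1) s.2‖ ^ 2) ∂(νQ.prod (ν.prod ν))
      = ∫⁻ s₁, ∫⁻ s₂, ENNReal.ofReal (‖twoStageCompress C (p - Q p s₁) s₂‖ ^ 2)
          ∂(ν.prod ν) ∂νQ :=
        lintegral_prod _ hm.aemeasurable
    _ ≤ ∫⁻ s₁, ENNReal.ofReal ((1 + θ ^ 2) * ‖p - Q p s₁‖ ^ 2) ∂νQ :=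
        lintegral_mono fun s₁ => lintegral_twoStageCompress_le hC hθ _
    _ = ENNReal.ofReal (1 + θ ^ 2) * ∫⁻ s₁, ENNReal.ofReal (‖Q p s₁ - p‖ ^ 2) ∂νQ := by
        simp_rw [ENNReal.ofReal_mul (by positivity : (0 : ℝ) ≤ 1 + θ ^ 2), norm_sub_rev p]
        exact lintegral_const_mul' _ _ ENNReal.ofReal_ne_top
    _ ≤ ENNReal.ofReal ((1 + θ ^ 2) * δ * ‖p‖ ^ 2) := by
        rw [mul_assoc, ENNReal.ofReal_mul (by positivity)]
        gcongr
        exact hQ p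

def errorUpdate {Ωg ΩQ : Type*} [NormedSpace ℝ E] (η : ℝ) (G : E → Ωg → E) (Q : E → ΩQ → E)
    (C : E → Ω → E) (z : E × E) (s : Ωg × ΩQ × Ω × Ω) : E :=
  twoStageCompress C (z.2 + η • G z.1 s.1 - Q (z.2 + η • G z.1 s.1) s.2.1) s.2.2

lemma measurable_errorUpdate {Ωg ΩQ : Type*} [MeasurableSpace Ωg] [MeasurableSpace ΩQ]
    [NormedSpace ℝ E] [BorelSpace E] [SecondCountableTopology E] {η : ℝ} {G : E → Ωg → E}
    {Q : E → ΩQ → E} {C : E → Ω → E} (hG : Measurable (Function.uncurry G))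
    (hQ : Measurable (Function.uncurry Q)) (hC : Measurable (Function.uncurry C)) :
    Measurable (Function.uncurry (errorUpdate η G Q C)) := by
  have hp : Measurable fun w : (E × E) × Ωg × ΩQ × Ω × Ω => w.1.2 + η • G w.1.1 w.2.1 :=
    measurable_fst.snd.add ((hG.comp (measurable_fst.fst.prodMk measurable_snd.fst)).const_smul η)
  exact (measurable_twoStageCompress hC).comp
    ((hp.sub (hQ.comp (hp.prodMk measurable_snd.snd.fst))).prodMk measurable_snd.snd.snd)

lemma lintegral_errorUpdate_le {Ωg ΩQ : Type*} [MeasurableSpace Ωg] [MeasurableSpace ΩQ]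
    [InnerProductSpace ℝ E] [CompleteSpace E] [BorelSpace E] [SecondCountableTopology E]
    {νg : Measure Ωg} [IsProbabilityMeasure νg] {νQ : Measure ΩQ} [IsProbabilityMeasure νQ]
    {ν : Measure Ω} [IsProbabilityMeasure ν] {G : E → Ωg → E} {grad : E → E} {σ : ℝ}
    (hG : IsUnbiasedEstimator G νg grad (fun _ => σ ^ 2)) {Q : E → ΩQ → E} {δ : ℝ}
    (hQm : Measurable (Function.uncurry Q))
    (hQ : ∀ a, ∫⁻ s, ENNReal.ofReal (‖Q a s - a‖ ^ 2) ∂νQ ≤ ENNReal.ofReal (δ * ‖a‖ ^ 2))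
    {C : E → Ω → E} {θ : ℝ} (hC : IsUnbiasedEstimator C ν id (fun a => θ * ‖a‖ ^ 2))
    (hθ : 0 ≤ θ) {c lam : ℝ} (hc : 0 ≤ c) (hlam : 0 < lam)
    (hδ : δ = c / ((1 + lam) * (1 + θ) ^ 2)) (η : ℝ) (z : E × E) :
    ∫⁻ s, ENNReal.ofReal (‖errorUpdate η G Q C z s‖ ^ 2) ∂(νg.prod (νQ.prod (ν.prod ν)))
      ≤ ENNReal.ofReal (c * ‖z.2‖ ^ 2 + c / lam * η ^ 2 * (‖grad z.1‖ ^ 2 + σ ^ 2)) := by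
  have hκ : (1 + θ ^ 2) * δ ≤ c / (1 + lam) :=
    calc (1 + θ ^ 2) * δ ≤ (1 + θ) ^ 2 * δ := by
          gcongr
          · rw [hδ]; positivity
          · nlinarith
      _ = c / (1 + lam) := by rw [hδ]; field_simp
  have hm : Measurable fun s => ENNReal.ofReal (‖errorUpdate η G Q C z s‖ ^ 2) :=
    ((measurable_errorUpdate hG.measurable hQm hC.measurable).comp
      (measurable_const.prodMk measurable_id)).norm.pow_const 2 |>.ennreal_ofReal
  calc ∫⁻ s, ENNReal.ofReal (‖errorUpdate η G Q C z s‖ ^ 2) ∂(νg.prod (νQ.prod (ν.prod ν)))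
      = ∫⁻ s₁, ∫⁻ s, ENNReal.ofReal (‖errorUpdate η G Q C z (s₁, s)‖ ^ 2)
          ∂(νQ.prod (ν.prod ν)) ∂νg :=
        lintegral_prod _ hm.aemeasurable
    _ ≤ ∫⁻ s₁, ENNReal.ofReal (c / (1 + lam) * ‖z.2 + η • G z.1 s₁‖ ^ 2) ∂νg :=
        lintegral_mono fun s₁ => (lintegral_twoStageCompress_sub_le hC hθ hQm hQ
          (z.2 + η • G z.1 s₁)).trans (by gcongr)
    _ ≤ ENNReal.ofReal (c / (1 + lam)) * (ENNReal.ofReal ((1 + lam) * ‖z.2‖ ^ 2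
          + (1 + lam⁻¹) * (η ^ 2 * ‖grad z.1‖ ^ 2)) + ENNReal.ofReal (η ^ 2 * σ ^ 2)) := by
        simp_rw [ENNReal.ofReal_mul (by positivity : 0 ≤ c / (1 + lam))]
        rw [lintegral_const_mul' _ _ ENNReal.ofReal_ne_top]
        gcongr
        exact hG.lintegral_norm_add_smul_sq_le hlam η z.1 z.2
    _ ≤ ENNReal.ofReal (c * ‖z.2‖ ^ 2 + c / lam * η ^ 2 * (‖grad z.1‖ ^ 2 + σ ^ 2)) := by
        rw [← ENNReal.ofReal_add (by positivity) (by positivity),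
          ← ENNReal.ofReal_mul (by positivity)]
        apply ENNReal.ofReal_le_ofReal
        have hexp : c / (1 + lam) * ((1 + lam) * ‖z.2‖ ^ 2
            + (1 + lam⁻¹) * (η ^ 2 * ‖grad z.1‖ ^ 2) + η ^ 2 * σ ^ 2)
            = c * ‖z.2‖ ^ 2 + c / lam * η ^ 2 * ‖grad z.1‖ ^ 2
              + c / (1 + lam) * (η ^ 2 * σ ^ 2) := by
          field_simp; ring
        have hnoise : c / (1 + lam) * (η ^ 2 * σ ^ 2) ≤ c / lam * (η ^ 2 * σ ^ 2) := by
          gcongr; linarith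
        linarith
end Estimators

section Trajectory

variable {E Ω Ωg ΩQ ΩC : Type*} [NormedAddCommGroup E] {N : ℕ} {η : ℝ}
  {G' : ℕ → Fin N → E → Ωg → E} {Q : E → ΩQ → E} {C : E → ΩC → E}
  {seed : ℕ → Fin N → Ω → Ωg × ΩQ × ΩC × ΩC} {x0 : E} {x : ℕ → Ω → E}
  {et q g p Δ : ℕ → Fin N → Ω → E}

variable (η G' Q C seed x0 x et q g p Δ) in
structure IsIConEFv1Trajectory [NormedSpace ℝ E] : Prop where
  x_zero : ∀ ω, x 0 ω = x0
  et_zero : ∀ i ω, et 0 i ω = 0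
  q_zero : ∀ i ω, q 0 i ω = 0
  g_eq : ∀ t i ω, g t i ω = G' t i (x t ω) (seed t i ω).1
  p_eq : ∀ t i ω, p t i ω = η • g t i ω + et t i ω + q t i ω
  Δ_eq : ∀ t i ω, Δ t i ω = Q (p t i ω) (seed t i ω).2.1
  x_succ : ∀ t ω, x (t + 1) ω = x t ω - (N : ℝ)⁻¹ • ∑ i, Δ t i ω
  et_succ : ∀ t i ω, et (t + 1) i ω = C (p t i ω - Δ t i ω) (seed t i ω).2.2.1
  q_succ : ∀ t i ω,
    q (t + 1) i ω = C (p t i ω - Δ t i ω - et (t + 1) i ω) (seed t i ω).2.2.2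

namespace IsIConEFv1Trajectory

lemma error_succ [NormedSpace ℝ E] (run : IsIConEFv1Trajectory η G' Q C seed x0 x et q g p Δ)
    (t : ℕ) (i : Fin N) (ω : Ω) :
    et (t + 1) i ω + q (t + 1) i ω
      = errorUpdate η (G' t i) Q C (x t ω, et t i ω + q t i ω) (seed t i ω) := by
  have hp : p t i ω = (et t i ω + q t i ω) + η • G' t i (x t ω) (seed t i ω).1 := by
    rw [run.p_eq, run.g_eq]; abel
  rw [run.q_succ, run.et_succ, run.Δ_eq, hp]
  rfl

variable [MeasurableSpace E] [BorelSpace E] [SecondCountableTopology E] [MeasurableSpace Ωg]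
  [MeasurableSpace ΩQ] [MeasurableSpace ΩC]

lemma measurable_pastSeeds [NormedSpace ℝ E]
    (run : IsIConEFv1Trajectory η G' Q C seed x0 x et q g p Δ)
    (hG : ∀ t i, Measurable (Function.uncurry (G' t i))) (hQ : Measurable (Function.uncurry Q))
    (hC : Measurable (Function.uncurry C)) (t : ℕ) :
    Measurable[pastSeeds seed t] (x t) ∧
      ∀ i, Measurable[pastSeeds seed t] (et t i) ∧ Measurable[pastSeeds seed t] (q t i) := by
  induction t with
  | zero =>
    refine ⟨?_, fun i => ⟨?_, ?_⟩⟩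
    · rw [funext run.x_zero]; exact measurable_const
    · rw [funext (run.et_zero i)]; exact measurable_const
    · rw [funext (run.q_zero i)]; exact measurable_const
  | succ t ih =>
    have hle := pastSeeds_mono seed t.le_succ
    have hseed := measurable_pastSeeds_seed seed t.lt_succ_self
    have hx : Measurable[pastSeeds seed (t + 1)] (x t) := ih.1.mono hle le_rfl
    have hp : ∀ i, Measurable[pastSeeds seed (t + 1)] (p t i) := fun i => by
      rw [funext (run.p_eq t i), funext (run.g_eq t i)]
      exact ((((hG t i).comp (hx.prodMk (hseed i).fst)).const_smul η).add
        ((ih.2 i).1.mono hle le_rfl)).add ((ih.2 i).2.mono hle le_rfl)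
    have hΔ : ∀ i, Measurable[pastSeeds seed (t + 1)] (Δ t i) := fun i => by
      rw [funext (run.Δ_eq t i)]
      exact hQ.comp ((hp i).prodMk (hseed i).snd.fst)
    have het : ∀ i, Measurable[pastSeeds seed (t + 1)] (et (t + 1) i) := fun i => by
      rw [funext (run.et_succ t i)]
      exact hC.comp (((hp i).sub (hΔ i)).prodMk (hseed i).snd.snd.fst)
    refine ⟨?_, fun i => ⟨het i, ?_⟩⟩
    · rw [funext (run.x_succ t)]
      exact hx.sub ((Finset.measurable_sum _ fun i _ => hΔ i).const_smul _)
    · rw [funext (run.q_succ t i)]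
      exact hC.comp ((((hp i).sub (hΔ i)).sub (het i)).prodMk (hseed i).snd.snd.snd)

variable [InnerProductSpace ℝ E] [CompleteSpace E] [MeasurableSpace Ω] {μ : Measure Ω}
  [IsProbabilityMeasure μ] {νg : Measure Ωg} [IsProbabilityMeasure νg] {νQ : Measure ΩQ}
  [IsProbabilityMeasure νQ] {νC : Measure ΩC} [IsProbabilityMeasure νC] {grad : E → E}
  {σ G δ θ c lam : ℝ}

lemma lintegral_error_succ_le_lintegral
    (run : IsIConEFv1Trajectory η G' Q C seed x0 x et q g p Δ)
    (hG : ∀ t i, IsUnbiasedEstimator (G' t i) νg grad (fun _ => σ ^ 2))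
    (hQm : Measurable (Function.uncurry Q))
    (hQ : ∀ a, ∫⁻ s, ENNReal.ofReal (‖Q a s - a‖ ^ 2) ∂νQ ≤ ENNReal.ofReal (δ * ‖a‖ ^ 2))
    (hC : IsUnbiasedEstimator C νC id (fun a => θ * ‖a‖ ^ 2)) (hθ : 0 ≤ θ) (hc : 0 ≤ c)
    (hlam : 0 < lam) (hδ : δ = c / ((1 + lam) * (1 + θ) ^ 2))
    (hseedMeas : ∀ t i, Measurable (seed t i))
    (hseedLaw : ∀ t i, μ.map (seed t i) = νg.prod (νQ.prod (νC.prod νC)))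
    (hseedIndep : iIndepFun (fun j : ℕ × Fin N => seed j.1 j.2) μ) (t : ℕ) (i : Fin N) :
    ∫⁻ ω, ENNReal.ofReal (‖et (t + 1) i ω + q (t + 1) i ω‖ ^ 2) ∂μ
      ≤ ∫⁻ ω, ENNReal.ofReal (c * ‖et t i ω + q t i ω‖ ^ 2
          + c / lam * η ^ 2 * (‖grad (x t ω)‖ ^ 2 + σ ^ 2)) ∂μ := by
  have hmeas := run.measurable_pastSeeds (fun t i => (hG t i).measurable) hQm hC.measurable t
  have hZ : Measurable[pastSeeds seed t] fun ω => (x t ω, et t i ω + q t i ω) :=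
    hmeas.1.prodMk ((hmeas.2 i).1.add (hmeas.2 i).2)
  have hφ : Measurable fun w : (E × E) × Ωg × ΩQ × ΩC × ΩC =>
      ENNReal.ofReal (‖errorUpdate η (G' t i) Q C w.1 w.2‖ ^ 2) :=
    (measurable_errorUpdate (hG t i).measurable hQm hC.measurable).norm.pow_const 2
      |>.ennreal_ofReal
  simp_rw [run.error_succ]
  exact lintegral_comp_le_of_indepFun (ψ := fun z =>
      ENNReal.ofReal (c * ‖z.2‖ ^ 2 + c / lam * η ^ 2 * (‖grad z.1‖ ^ 2 + σ ^ 2)))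
    (hZ.mono (pastSeeds_le hseedMeas t) le_rfl) (hseedMeas t i)
    (indepFun_seed_of_measurable_pastSeeds hseedMeas hseedIndep hZ i) hφ fun z => by
      rw [hseedLaw t i]
      exact lintegral_errorUpdate_le (hG t i) hQm hQ hC hθ hc hlam hδ η z

lemma lintegral_error_succ_le
    (run : IsIConEFv1Trajectory η G' Q C seed x0 x et q g p Δ)
    (hG : ∀ t i, IsUnbiasedEstimator (G' t i) νg grad (fun _ => σ ^ 2))
    (hQm : Measurable (Function.uncurry Q))
    (hQ : ∀ a, ∫⁻ s, ENNReal.ofReal (‖Q a s - a‖ ^ 2) ∂νQ ≤ ENNReal.ofReal (δ * ‖a‖ ^ 2))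
    (hC : IsUnbiasedEstimator C νC id (fun a => θ * ‖a‖ ^ 2)) (hθ : 0 ≤ θ) (hc : 0 ≤ c)
    (hlam : 0 < lam) (hδ : δ = c / ((1 + lam) * (1 + θ) ^ 2))
    (hseedMeas : ∀ t i, Measurable (seed t i))
    (hseedLaw : ∀ t i, μ.map (seed t i) = νg.prod (νQ.prod (νC.prod νC)))
    (hseedIndep : iIndepFun (fun j : ℕ × Fin N => seed j.1 j.2) μ) (t : ℕ) (i : Fin N)
    (hgrad : ∫⁻ ω, ENNReal.ofReal (‖grad (x t ω)‖ ^ 2) ∂μ ≤ ENNReal.ofReal (G ^ 2)) :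
    ∫⁻ ω, ENNReal.ofReal (‖et (t + 1) i ω + q (t + 1) i ω‖ ^ 2) ∂μ
      ≤ ENNReal.ofReal c * ∫⁻ ω, ENNReal.ofReal (‖et t i ω + q t i ω‖ ^ 2) ∂μ
        + ENNReal.ofReal (c / lam * η ^ 2 * (σ ^ 2 + G ^ 2)) := by
  have hmeas := run.measurable_pastSeeds (fun t i => (hG t i).measurable) hQm hC.measurable t
  have he : Measurable fun ω => ENNReal.ofReal c * ENNReal.ofReal (‖et t i ω + q t i ω‖ ^ 2) :=
    (((((hmeas.2 i).1.add (hmeas.2 i).2).mono (pastSeeds_le hseedMeas t) le_rfl).norm.pow_const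
      2).ennreal_ofReal).const_mul _
  have hK : 0 ≤ c / lam * η ^ 2 := by positivity
  have hsplit : ∀ ω, ENNReal.ofReal (c * ‖et t i ω + q t i ω‖ ^ 2
      + c / lam * η ^ 2 * (‖grad (x t ω)‖ ^ 2 + σ ^ 2))
      = ENNReal.ofReal c * ENNReal.ofReal (‖et t i ω + q t i ω‖ ^ 2)
        + ENNReal.ofReal (c / lam * η ^ 2)
          * (ENNReal.ofReal (‖grad (x t ω)‖ ^ 2) + ENNReal.ofReal (σ ^ 2)) := fun ω => by
    rw [ENNReal.ofReal_add (by positivity) (by positivity), ENNReal.ofReal_mul hc,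
      ENNReal.ofReal_mul hK, ENNReal.ofReal_add (by positivity) (by positivity)]
  refine (run.lintegral_error_succ_le_lintegral hG hQm hQ hC hθ hc hlam hδ hseedMeas hseedLaw
    hseedIndep t i).trans ?_
  rw [lintegral_congr hsplit, lintegral_add_left he,
    lintegral_const_mul' _ _ ENNReal.ofReal_ne_top, lintegral_const_mul' _ _ ENNReal.ofReal_ne_top,
    lintegral_add_right _ measurable_const, lintegral_const, measure_univ, mul_one,
    ENNReal.ofReal_mul (p := c / lam * η ^ 2) hK, ENNReal.ofReal_add (sq_nonneg σ) (sq_nonneg G),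
    add_comm (ENNReal.ofReal (σ ^ 2))]
  gcongr

end IsIConEFv1Trajectory

end Trajectory

theorem iconef_v1_error_energy_bound_general
    (d N : ℕ)
    (σ G δ θ c lam η : ℝ)
    (hθ : 0 ≤ θ)
    (hc : c ∈ Set.Ioo (0 : ℝ) 1) (hlam : 0 < lam)
    (hδeq : δ = c / ((1 + lam) * (1 + θ) ^ 2))
    (f : EuclideanSpace ℝ (Fin d) → ℝ)
    -- seed spaces for the stochastic gradients and the compressor calls
    {Ωg ΩQ ΩC : Type} [MeasurableSpace Ωg] [MeasurableSpace ΩQ] [MeasurableSpace ΩC]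
    (νg : Measure Ωg) (νQ : Measure ΩQ) (νC : Measure ΩC)
    [IsProbabilityMeasure νg] [IsProbabilityMeasure νQ] [IsProbabilityMeasure νC]
    (G' : ℕ → Fin N → EuclideanSpace ℝ (Fin d) → Ωg → EuclideanSpace ℝ (Fin d))
    (Q : EuclideanSpace ℝ (Fin d) → ΩQ → EuclideanSpace ℝ (Fin d))
    (C : EuclideanSpace ℝ (Fin d) → ΩC → EuclideanSpace ℝ (Fin d))
    (hGmeas : ∀ t i, Measurable (Function.uncurry (G' t i)))
    (hQmeas : Measurable (Function.uncurry Q))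
    (hCmeas : Measurable (Function.uncurry C))
    -- Assumption 2: unbiased stochastic gradients with bounded variance
    (hGmean : ∀ t i a, ∫ ω, G' t i a ω ∂νg = gradient f a)
    (hGvar : ∀ t i a,
      ∫⁻ ω, (‖G' t i a ω - gradient f a‖₊ : ℝ≥0∞) ^ 2 ∂νg ≤ ENNReal.ofReal (σ ^ 2))
    -- Assumption 4: contractive gradient compressor
    (hQvar : ∀ a, ∫⁻ ω, (‖Q a ω - a‖₊ : ℝ≥0∞) ^ 2 ∂νQ ≤ ENNReal.ofReal (δ * ‖a‖ ^ 2))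
    -- Assumption 3: unbiased error compressor
    (hCmean : ∀ a, ∫ ω, C a ω ∂νC = a)
    (hCvar : ∀ a, ∫⁻ ω, (‖C a ω - a‖₊ : ℝ≥0∞) ^ 2 ∂νC ≤ ENNReal.ofReal (θ * ‖a‖ ^ 2))
    -- the underlying sample space carrying i.i.d. fresh seeds for every (t, i):
    -- one gradient seed, one Q seed, and two independent C seeds per step
    {Ω : Type} [MeasurableSpace Ω] (μ : Measure Ω) [IsProbabilityMeasure μ]
    (seed : ℕ → Fin N → Ω → Ωg × ΩQ × ΩC × ΩC)
    (hseedMeas : ∀ t i, Measurable (seed t i))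
    (hseedLaw : ∀ t i, Measure.map (seed t i) μ = νg.prod (νQ.prod (νC.prod νC)))
    (hseedIndep : iIndepFun
      (fun q : ℕ × Fin N => seed q.1 q.2) μ)
    -- the iConEF-v1 trajectories
    (x0 : EuclideanSpace ℝ (Fin d))
    (x : ℕ → Ω → EuclideanSpace ℝ (Fin d))
    (et q g p Δ : ℕ → Fin N → Ω → EuclideanSpace ℝ (Fin d))
    (hx0 : ∀ ω, x 0 ω = x0)
    (het0 : ∀ i ω, et 0 i ω = 0)
    (hq0 : ∀ i ω, q 0 i ω = 0)
    (hg : ∀ t i ω, g t i ω = G' t i (x t ω) (seed t i ω).1)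
    (hp : ∀ t i ω, p t i ω = η • g t i ω + et t i ω + q t i ω)
    (hΔ : ∀ t i ω, Δ t i ω = Q (p t i ω) (seed t i ω).2.1)
    (hx : ∀ t ω, x (t + 1) ω = x t ω - (N : ℝ)⁻¹ • ∑ i, Δ t i ω)
    (het : ∀ t i ω, et (t + 1) i ω = C (p t i ω - Δ t i ω) (seed t i ω).2.2.1)
    (hq : ∀ t i ω,
      q (t + 1) i ω = C (p t i ω - Δ t i ω - et (t + 1) i ω) (seed t i ω).2.2.2)
    -- Assumption 2: bounded expected squared gradient norm
    (hgradbound : ∀ t,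
      ∫⁻ ω, (‖gradient f (x t ω)‖₊ : ℝ≥0∞) ^ 2 ∂μ ≤ ENNReal.ofReal (G ^ 2)) :
    ∀ t : ℕ,
      ∫⁻ ω, (‖(N : ℝ)⁻¹ • ∑ i, (et (t + 1) i ω + q (t + 1) i ω)‖₊ : ℝ≥0∞) ^ 2 ∂μ
        ≤ ENNReal.ofReal ((c / ((1 - c) * lam)) * η ^ 2 * (σ ^ 2 + G ^ 2)) := by
  simp only [coe_nnnorm_sq] at hGvar hQvar hCvar hgradbound ⊢
  obtain ⟨hc0, hc1⟩ := hc
  have run : IsIConEFv1Trajectory η G' Q C seed x0 x et q g p Δ :=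
    ⟨hx0, het0, hq0, hg, hp, hΔ, hx, het, hq⟩
  have hGest : ∀ t i, IsUnbiasedEstimator (G' t i) νg (gradient f) (fun _ => σ ^ 2) :=
    fun t i => ⟨hGmeas t i, hGmean t i, hGvar t i⟩
  have hCest : IsUnbiasedEstimator C νC id (fun a => θ * ‖a‖ ^ 2) := ⟨hCmeas, hCmean, hCvar⟩
  have herror : ∀ t i, ∫⁻ ω, ENNReal.ofReal (‖et t i ω + q t i ω‖ ^ 2) ∂μ
      ≤ ENNReal.ofReal (c / ((1 - c) * lam) * η ^ 2 * (σ ^ 2 + G ^ 2)) := fun t i => by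
    have h := ENNReal.le_ofReal_div_one_sub_of_le_mul_add hc0.le hc1 (by positivity)
      (by simp [het0, hq0]) (fun t => run.lintegral_error_succ_le hGest hQmeas hQvar hCest hθ
        hc0.le hlam hδeq hseedMeas hseedLaw hseedIndep t i (hgradbound t)) t
    convert h using 2
    rw [mul_comm (1 - c), ← div_div]
    ring
  intro t
  have hmeas := run.measurable_pastSeeds hGmeas hQmeas hCmeas (t + 1)
  have h := lintegral_norm_smul_sum_sq_le Finset.univ
    (fun i _ => (((hmeas.2 i).1.add (hmeas.2 i).2).mono (pastSeeds_le hseedMeas _)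
      le_rfl).aestronglyMeasurable) (fun i _ => herror (t + 1) i)
  rwa [Finset.card_univ, Fintype.card_fin] at h

/-- **iConEF-v1 error-energy bound (Lemma 3).**
Under iConEF-v1 (`p t i = η • g t i + ẽ t i + q t i`, `Δ t i = Q (p t i)`,
`x (t+1) = x t - (1/N) • ∑ i, Δ t i`, `ẽ (t+1) i = C (p t i - Δ t i)`,
`q (t+1) i = C (p t i - Δ t i - ẽ (t+1) i)`, `ẽ 0 i = q 0 i = 0`), with unbiased
stochastic gradients of variance `≤ σ²` and `E[‖∇f(x t)‖²] ≤ G²`, an unbiased error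
compressor `C` with `E[‖C a - a‖²|a] ≤ θ‖a‖²`, and a gradient compressor `Q` with
`E[‖Q a - a‖²|a] ≤ δ‖a‖²` where `δ = c/((1+λ)(1+θ)²)` for some `c ∈ (0,1)`, `λ > 0`:
writing `e (t+1) i = ẽ (t+1) i + q (t+1) i`, for every `t ≥ 0`,
`E[‖(1/N) ∑ i, e (t+1) i‖²] ≤ (c/((1-c)λ)) η² (σ² + G²)`. -/
theorem iconef_v1_error_energy_bound
    (d N : ℕ) (hN : 0 < N)
    (σ G δ θ c lam η : ℝ)
    (hσ : 0 ≤ σ) (hG : 0 ≤ G) (hθ : 0 ≤ θ)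
    (hδ0 : 0 < δ) (hδ1 : δ < 1) (hc : c ∈ Set.Ioo (0 : ℝ) 1) (hlam : 0 < lam)
    (hδeq : δ = c / ((1 + lam) * (1 + θ) ^ 2))
    (hη : 0 < η)
    (f : EuclideanSpace ℝ (Fin d) → ℝ) (hf : Differentiable ℝ f)
    -- seed spaces for the stochastic gradients and the compressor calls
    {Ωg ΩQ ΩC : Type} [MeasurableSpace Ωg] [MeasurableSpace ΩQ] [MeasurableSpace ΩC]
    (νg : Measure Ωg) (νQ : Measure ΩQ) (νC : Measure ΩC)
    [IsProbabilityMeasure νg] [IsProbabilityMeasure νQ] [IsProbabilityMeasure νC]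
    (G' : ℕ → Fin N → EuclideanSpace ℝ (Fin d) → Ωg → EuclideanSpace ℝ (Fin d))
    (Q : EuclideanSpace ℝ (Fin d) → ΩQ → EuclideanSpace ℝ (Fin d))
    (C : EuclideanSpace ℝ (Fin d) → ΩC → EuclideanSpace ℝ (Fin d))
    (hGmeas : ∀ t i, Measurable (Function.uncurry (G' t i)))
    (hQmeas : Measurable (Function.uncurry Q))
    (hCmeas : Measurable (Function.uncurry C))
    -- Assumption 2: unbiased stochastic gradients with bounded variance
    (hGmean : ∀ t i a, ∫ ω, G' t i a ω ∂νg = gradient f a)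
    (hGvar : ∀ t i a,
      ∫⁻ ω, (‖G' t i a ω - gradient f a‖₊ : ℝ≥0∞) ^ 2 ∂νg ≤ ENNReal.ofReal (σ ^ 2))
    -- Assumption 4: contractive gradient compressor
    (hQvar : ∀ a, ∫⁻ ω, (‖Q a ω - a‖₊ : ℝ≥0∞) ^ 2 ∂νQ ≤ ENNReal.ofReal (δ * ‖a‖ ^ 2))
    -- Assumption 3: unbiased error compressor
    (hCmean : ∀ a, ∫ ω, C a ω ∂νC = a)
    (hCvar : ∀ a, ∫⁻ ω, (‖C a ω - a‖₊ : ℝ≥0∞) ^ 2 ∂νC ≤ ENNReal.ofReal (θ * ‖a‖ ^ 2))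
    -- the underlying sample space carrying i.i.d. fresh seeds for every (t, i):
    -- one gradient seed, one Q seed, and two independent C seeds per step
    {Ω : Type} [MeasurableSpace Ω] (μ : Measure Ω) [IsProbabilityMeasure μ]
    (seed : ℕ → Fin N → Ω → Ωg × ΩQ × ΩC × ΩC)
    (hseedMeas : ∀ t i, Measurable (seed t i))
    (hseedLaw : ∀ t i, Measure.map (seed t i) μ = νg.prod (νQ.prod (νC.prod νC)))
    (hseedIndep : iIndepFun
      (fun q : ℕ × Fin N => seed q.1 q.2) μ)
    -- the iConEF-v1 trajectories
    (x0 : EuclideanSpace ℝ (Fin d))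
    (x : ℕ → Ω → EuclideanSpace ℝ (Fin d))
    (et q g p Δ : ℕ → Fin N → Ω → EuclideanSpace ℝ (Fin d))
    (hx0 : ∀ ω, x 0 ω = x0)
    (het0 : ∀ i ω, et 0 i ω = 0)
    (hq0 : ∀ i ω, q 0 i ω = 0)
    (hg : ∀ t i ω, g t i ω = G' t i (x t ω) (seed t i ω).1)
    (hp : ∀ t i ω, p t i ω = η • g t i ω + et t i ω + q t i ω)
    (hΔ : ∀ t i ω, Δ t i ω = Q (p t i ω) (seed t i ω).2.1)
    (hx : ∀ t ω, x (t + 1) ω = x t ω - (N : ℝ)⁻¹ • ∑ i, Δ t i ω)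
    (het : ∀ t i ω, et (t + 1) i ω = C (p t i ω - Δ t i ω) (seed t i ω).2.2.1)
    (hq : ∀ t i ω,
      q (t + 1) i ω = C (p t i ω - Δ t i ω - et (t + 1) i ω) (seed t i ω).2.2.2)
    -- Assumption 2: bounded expected squared gradient norm
    (hgradbound : ∀ t,
      ∫⁻ ω, (‖gradient f (x t ω)‖₊ : ℝ≥0∞) ^ 2 ∂μ ≤ ENNReal.ofReal (G ^ 2)) :
    ∀ t : ℕ,
      ∫⁻ ω, (‖(N : ℝ)⁻¹ • ∑ i, (et (t + 1) i ω + q (t + 1) i ω)‖₊ : ℝ≥0∞) ^ 2 ∂μ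
        ≤ ENNReal.ofReal ((c / ((1 - c) * lam)) * η ^ 2 * (σ ^ 2 + G ^ 2)) :=
  iconef_v1_error_energy_bound_general d N σ G δ θ c lam η hθ hc hlam hδeq f νg νQ νC G' Q C hGmeas
    hQmeas hCmeas hGmean hGvar hQvar hCmean hCvar μ seed hseedMeas hseedLaw hseedIndep x0 x et q g p
    Δ hx0 het0 hq0 hg hp hΔ hx het hq hgradbound
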